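/- arXiv:1305.2855 — 4 statements merged into one kernel-verified Lean document; each statement's English description precedes it below -/
import Mathlib

section
/- For the Lie algebra g₁ with brackets [X,Y]=Y, [X,W]=W and orthonormal basis {X,Y,Z,W}, the sectional curvature of the plane spanned by U = aX+bY+cZ+dW and V = a'X+b'Y+c'Z+d'W equals −{(ab'−ba')² + (ad'−da')² + (bd'−db')²} when U,V are orthonormal; in particular the sectional curvature is everywhere non-positive. -/
open Real

abbrev V4 := Fin 4 → ℝ

/-- the inner product making the basis orthonormal -/
def ip (u v : V4) : ℝ := u 0 * v 0 + u 1 * v 1 + u 2 * v 2 + u 3 * v 3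

def X : V4 := ![1, 0, 0, 0]
def Y : V4 := ![0, 1, 0, 0]
def Z : V4 := ![0, 0, 1, 0]
def W : V4 := ![0, 0, 0, 1]

def e : Fin 4 → V4 := ![X, Y, Z, W]

def br (u v : V4) : V4 := (u 0 * v 1 - u 1 * v 0) • Y + (u 0 * v 3 - u 3 * v 0) • W

theorem stmt1 (nabla : V4 → V4 → V4)
    (hK : ∀ u v w : V4, 2 * ip (nabla u v) w = ip (br u v) w - ip (br v w) u + ip (br w u) v)
    (R : V4 → V4 → V4 → V4)
    (hR : ∀ u v w : V4, R u v w = nabla u (nabla v w) - nabla v (nabla u w) - nabla (br u v) w)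
    (a b c d a' b' c' d' : ℝ) (u v : V4)
    (hu : u = a • X + b • Y + c • Z + d • W)
    (hv : v = a' • X + b' • Y + c' • Z + d' • W)
    (huu : ip u u = 1) (hvv : ip v v = 1) (huv : ip u v = 0) :
    ip (R v u u) v / (ip u u * ip v v - ip u v ^ 2) =
      -((a * b' - b * a') ^ 2 + (a * d' - d * a') ^ 2 + (b * d' - d * b') ^ 2) ∧
    ip (R v u u) v / (ip u u * ip v v - ip u v ^ 2) ≤ 0 := by
  have h0 : ∀ x y : V4, nabla x y 0 = x 1 * y 1 + x 3 * y 3 := by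
    intro x y; have h := hK x y X
    simp [ip, br, X, Y, W] at h
    linarith
  have h1 : ∀ x y : V4, nabla x y 1 = -(x 1 * y 0) := by
    intro x y; have h := hK x y Y
    simp [ip, br, X, Y, W] at h
    linarith
  have h2 : ∀ x y : V4, nabla x y 2 = 0 := by
    intro x y; have h := hK x y Z
    simp [ip, br, X, Y, Z, W] at h
    linarith
  have h3 : ∀ x y : V4, nabla x y 3 = -(x 3 * y 0) := by
    intro x y; have h := hK x y W
    simp [ip, br, X, Y, W] at h
    linarith
  have key : ip (R v u u) v =
      -((a * b' - b * a') ^ 2 + (a * d' - d * a') ^ 2 + (b * d' - d * b') ^ 2) := by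
    subst hu hv
    simp only [hR, ip, Pi.sub_apply, h0, h1, h2, h3, br, Pi.add_apply, Pi.smul_apply,
      smul_eq_mul, X, Y, Z, W, Matrix.cons_val_zero, Matrix.cons_val_one, Matrix.head_cons,
      Matrix.cons_val_two, Matrix.tail_cons, Matrix.cons_val_three]
    ring
  rw [huu, hvv, huv, key]
  constructor
  · norm_num
  · norm_num
    nlinarith [sq_nonneg (a*b'-b*a'), sq_nonneg (a*d'-d*a'), sq_nonneg (b*d'-d*b')]
end

section
/- The Riemannian Lie group corresponding to the Lie algebra g₁ (with [X,Y]=Y, [X,W]=W and orthonormal basis {X,Y,Z,W}) has constant scalar curvature −6. -/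
/-!
`g₁` is the orthogonal direct sum of the abelian line `ℝ Z` and the Lie algebra
`span {X, Y, W}` with `[X, Y] = Y`, `[X, W] = W`, which is the Lie algebra of real hyperbolic
`3`-space. Hence every coordinate plane inside `span {X, Y, W}` has sectional curvature `-1`,
every coordinate plane containing `Z` is flat, and the six ordered pairs of distinct vectors among
`X, Y, W` contribute `-6`.
-/

open Real

lemma ip_e_right (v : V4) (i : Fin 4) : ip v (e i) = v i := by
  fin_cases i <;> simp [ip, e, X, Y, Z, W]

lemma gram_e_of_ne {j k : Fin 4} (hjk : j ≠ k) :
    ip (e j) (e j) * ip (e k) (e k) - ip (e j) (e k) ^ 2 = 1 := by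
  simp only [ip_e_right]
  fin_cases j <;> fin_cases k <;> simp_all [e, X, Y, Z, W]

def leviCivita (u v : V4) : V4 := ![u 1 * v 1 + u 3 * v 3, -(u 1 * v 0), 0, -(u 3 * v 0)]

lemma eq_leviCivita_of_koszul (nabla : V4 → V4 → V4)
    (hK : ∀ u v w : V4, 2 * ip (nabla u v) w = ip (br u v) w - ip (br v w) u + ip (br w u) v) :
    nabla = leviCivita := by
  funext u v i
  have h := hK u v (e i)
  rw [ip_e_right] at h
  fin_cases i <;> simp [ip, br, e, X, Y, Z, W, leviCivita] at h ⊢ <;> linarith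

def curvature (nabla : V4 → V4 → V4) (u v w : V4) : V4 :=
  nabla u (nabla v w) - nabla v (nabla u w) - nabla (br u v) w

lemma ip_curvature_leviCivita_e (j k : Fin 4) :
    ip (curvature leviCivita (e k) (e j) (e j)) (e k) = if j ≠ k ∧ j ≠ 2 ∧ k ≠ 2 then -1 else 0 := by
  rw [ip_e_right]
  fin_cases j <;> fin_cases k <;> simp [curvature, leviCivita, br, e, X, Y, Z, W]

theorem stmt2 (nabla : V4 → V4 → V4)
    (hK : ∀ u v w : V4, 2 * ip (nabla u v) w = ip (br u v) w - ip (br v w) u + ip (br w u) v)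
    (R : V4 → V4 → V4 → V4)
    (hR : ∀ u v w : V4, R u v w = nabla u (nabla v w) - nabla v (nabla u w) - nabla (br u v) w) :
    (∑ j : Fin 4, ∑ k : Fin 4, if j ≠ k then ip (R (e k) (e j) (e j)) (e k) / (ip (e j) (e j) * ip (e k) (e k) - ip (e j) (e k) ^ 2) else 0) = -6 := by
  obtain rfl : nabla = leviCivita := eq_leviCivita_of_koszul nabla hK
  obtain rfl : R = curvature leviCivita := by funext u v w; exact hR u v w
  calc _ = ∑ j : Fin 4, ∑ k : Fin 4, if j ≠ k ∧ j ≠ 2 ∧ k ≠ 2 then (-1 : ℝ) else 0 := by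
        refine Fintype.sum_congr _ _ fun j ↦ Fintype.sum_congr _ _ fun k ↦ ?_
        by_cases hjk : j = k
        · simp [hjk]
        · simp [hjk, gram_e_of_ne hjk, ip_curvature_leviCivita_e]
    _ = -6 := by simp [Fin.sum_univ_four]; norm_num
end

section
/- In the Lie algebra g₁ with brackets [X,Y]=Y, [X,W]=W, a vector Q = q₁X + q₂Y + q₃Z + q₄W satisfies ∇_U Q = 0 for all U ∈ g₁ if and only if q₁ = q₂ = q₄ = 0, i.e. Q is a multiple of Z. -/
open Real

theorem stmt15 (nabla : V4 → V4 → V4)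
    (hK : ∀ u v w : V4, 2 * ip (nabla u v) w = ip (br u v) w - ip (br v w) u + ip (br w u) v)
    (q1 q2 q3 q4 : ℝ) (Q : V4)
    (hQ : Q = q1 • X + q2 • Y + q3 • Z + q4 • W) :
    (∀ u : V4, nabla u Q = 0) ↔ (q1 = 0 ∧ q2 = 0 ∧ q4 = 0) := by
  subst hQ
  constructor
  · intro h
    have h1 := hK Y (q1 • X + q2 • Y + q3 • Z + q4 • W) Y
    have h2 := hK Y (q1 • X + q2 • Y + q3 • Z + q4 • W) X
    have h3 := hK W (q1 • X + q2 • Y + q3 • Z + q4 • W) X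
    rw [h Y] at h1 h2
    rw [h W] at h3
    simp [ip, br, X, Y, Z, W] at h1 h2 h3
    refine ⟨?_, ?_, ?_⟩ <;> linarith
  · rintro ⟨rfl, rfl, rfl⟩
    intro u
    funext i
    have key : ∀ w : V4, ip (nabla u ((0:ℝ) • X + (0:ℝ) • Y + q3 • Z + (0:ℝ) • W)) w = 0 := by
      intro w
      have := hK u ((0:ℝ) • X + (0:ℝ) • Y + q3 • Z + (0:ℝ) • W) w
      simp [ip, br, X, Y, Z, W] at this ⊢
      linarith
    fin_cases i
    · have := key X; simpa [ip, X] using this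
    · have := key Y; simpa [ip, Y] using this
    · have := key Z; simpa [ip, Z] using this
    · have := key W; simpa [ip, W] using this
end

section
/- For the Lie algebra g₁ with brackets [X,Y]=Y, [X,W]=W, let Q = qZ with 0<|q|<1 and consider the Randers metric F(Y') = √⟨Y',Y'⟩ + ⟨Q,Y'⟩. For orthonormal vectors U = aX+bY+cZ+dW, V = a'X+b'Y+c'Z+d'W with 1+qc > 0, the flag curvature of the flag (span{U,V}, U) equals −{(ab'−ba')² + (ad'−da')² + (bd'−db')²}/(1+qc)², which is non-positive. -/
open Real

def vec (a b c d : ℝ) : V4 := ![a, b, c, d]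

theorem stmt19 (nabla : V4 → V4 → V4)
    (hK : ∀ u v w : V4, 2 * ip (nabla u v) w = ip (br u v) w - ip (br v w) u + ip (br w u) v)
    (R : V4 → V4 → V4 → V4)
    (hR : ∀ u v w : V4, R u v w = nabla u (nabla v w) - nabla v (nabla u w) - nabla (br u v) w)
    (q : ℝ) (hq0 : 0 < |q|) (hq1 : |q| < 1)
    (Q : V4) (hQ : Q = q • Z)
    (gy : V4 → V4 → V4 → ℝ)
    (hg : ∀ y u v : V4, gy y u v =
      ip u v + ip Q u * ip Q v - ip Q y * ip y v * ip y u / (ip y y) ^ ((3 : ℝ)/2) +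
        (ip Q u * ip y v + ip Q y * ip u v + ip Q v * ip y u) / Real.sqrt (ip y y))
    (a b c d a' b' c' d' : ℝ) (u v : V4)
    (hu : u = a • X + b • Y + c • Z + d • W)
    (hv : v = a' • X + b' • Y + c' • Z + d' • W)
    (huu : ip u u = 1) (hvv : ip v v = 1) (huv : ip u v = 0)
    (hpos : 1 + q * c > 0) :
    gy u (R v u u) v / (gy u u u * gy u v v - (gy u u v) ^ 2) =
      -((a * b' - b * a') ^ 2 + (a * d' - d * a') ^ 2 + (b * d' - d * b') ^ 2) /
        (1 + q * c) ^ 2 ∧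
    gy u (R v u u) v / (gy u u u * gy u v v - (gy u u v) ^ 2) ≤ 0 := by
  have hnab : ∀ p r : V4, nabla p r =
      ![p 1 * r 1 + p 3 * r 3, -(p 1 * r 0), 0, -(p 3 * r 0)] := by
    intro p r
    have h0 := hK p r X
    have h1 := hK p r Y
    have h2 := hK p r Z
    have h3 := hK p r W
    simp [ip, br, X, Y, Z, W] at h0 h1 h2 h3
    funext i
    fin_cases i <;> simp [ip] <;> linarith
  have hu' : u = vec a b c d := by
    rw [hu]; funext i; fin_cases i <;> simp [X, Y, Z, W, vec]
  have hv' : v = vec a' b' c' d' := by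
    rw [hv]; funext i; fin_cases i <;> simp [X, Y, Z, W, vec]
  subst hu' hv'
  have hr : R (vec a' b' c' d') (vec a b c d) (vec a b c d) =
      vec (-((a' * b - b' * a) * b + (a' * d - d' * a) * d))
        (d * (b * d' - d * b') + a * (a' * b - a * b')) 0
        (b * (b' * d - b * d') + a * (a' * d - a * d')) := by
    rw [hR]
    simp only [hnab]
    funext i
    fin_cases i <;> simp [br, Y, W, vec] <;> ring
  set r : V4 := vec (-((a' * b - b' * a) * b + (a' * d - d' * a) * d))
      (d * (b * d' - d * b') + a * (a' * b - a * b')) 0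
      (b * (b' * d - b * d') + a * (a' * d - a * d')) with hrdef
  have hQu : ip Q (vec a b c d) = q * c := by simp [hQ, ip, Z, vec]
  have hQv : ip Q (vec a' b' c' d') = q * c' := by simp [hQ, ip, Z, vec]
  have hQr : ip Q r = 0 := by simp [hQ, ip, Z, vec, hrdef]
  have hur : ip (vec a b c d) r = 0 := by
    simp only [ip, hrdef, vec]
    simp
    ring
  have hrv : ip r (vec a' b' c' d') =
      -((a * b' - b * a') ^ 2 + (a * d' - d * a') ^ 2 + (b * d' - d * b') ^ 2) := by
    simp only [ip, hrdef, vec]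
    simp
    ring
  have hsq : Real.sqrt (ip (vec a b c d) (vec a b c d)) = 1 := by rw [huu, Real.sqrt_one]
  have hrp : (ip (vec a b c d) (vec a b c d)) ^ ((3 : ℝ) / 2) = 1 := by
    rw [huu, Real.one_rpow]
  have hne : (1 + q * c) ≠ 0 := ne_of_gt hpos
  have g1 : gy (vec a b c d) (vec a b c d) (vec a b c d) = (1 + q * c) ^ 2 := by
    rw [hg, hsq, hrp, huu, hQu]; ring
  have g2 : gy (vec a b c d) (vec a' b' c' d') (vec a' b' c' d') =
      1 + q * c + (q * c') ^ 2 := by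
    rw [hg, hsq, hrp, hvv, huv, hQu, hQv]; ring
  have g3 : gy (vec a b c d) (vec a b c d) (vec a' b' c' d') = q * c' * (1 + q * c) := by
    rw [hg, hsq, hrp, huu, huv, hQu, hQv]; ring
  have g4 : gy (vec a b c d) (R (vec a' b' c' d') (vec a b c d) (vec a b c d)) (vec a' b' c' d') =
      (1 + q * c) *
        (-((a * b' - b * a') ^ 2 + (a * d' - d * a') ^ 2 + (b * d' - d * b') ^ 2)) := by
    rw [hg, hr, hsq, hrp, hrv, hQr, hQu, hQv, huv, hur]; ring
  rw [g1, g2, g3, g4]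
  have hD : (1 + q * c) ^ 2 * (1 + q * c + (q * c') ^ 2) - (q * c' * (1 + q * c)) ^ 2
      = (1 + q * c) ^ 3 := by ring
  rw [hD]
  have hS : 0 ≤ (a * b' - b * a') ^ 2 + (a * d' - d * a') ^ 2 + (b * d' - d * b') ^ 2 := by
    positivity
  constructor
  · field_simp
  · apply div_nonpos_of_nonpos_of_nonneg
    · nlinarith
    · positivity
end
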